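/- Let f, g : Bool × Bool × Bool → Bool be local rules of elementary cellular automata and suppose f ≤ₖ g with witnessing encoding enc : Bool → Bool^k. Then for every t ≥ 1 and every Boolean sequence c of length l ≥ 2t + 1, one has ē(f̃^t(c)) = g̃^{kt}(ē(c)), where f̃^t is the t-fold iterate of the unravelling of f and g̃^{kt} is the (k·t)-fold iterate of the unravelling of g. -/

import Mathlib

/-- The unravelling of a local rule `f`: it maps a sequence `(b₁,…,bₙ)` (for `n ≥ 3`) to
`(f(b₁,b₂,b₃), f(b₂,b₃,b₄), …, f(b_{n-2},b_{n-1},bₙ))` of length `n - 2`. -/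
def unravel {S : Type*} (f : S × S × S → S) : List S → List S
  | a :: b :: c :: rest => f (a, b, c) :: unravel f (b :: c :: rest)
  | _ => []

/-- Entrywise encoding `ē`: replace each entry by its block and concatenate. -/
def ebar {S T : Type*} (e : S → List T) (c : List S) : List T :=
  (c.map e).flatten

/-- `f ≤ₖ g`: the ECA rule `f` is emulated by `g` with supercell size `k`. -/
def Emulates (f g : Bool × Bool × Bool → Bool) (k : ℕ) : Prop :=
  ∃ enc : Bool → List Bool, Function.Injective enc ∧ (∀ b, (enc b).length = k) ∧
    ∀ s₁ s₂ s₃ : Bool,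
      enc (f (s₁, s₂, s₃)) = (unravel g)^[k] (enc s₁ ++ enc s₂ ++ enc s₃)

/-!
Unravelling is local: cell `i` of `g̃ⁿ(l)` depends only on `l[i], …, l[i + 2n]`, so `g̃ⁿ(xs ++ ys)`
is `g̃ⁿ(xs ++ ys.take (2n))` followed by `g̃ⁿ(ys)`. For `xs = enc a` and `ys = ē(b :: d :: rest)`
the first part is `g̃ᵏ(enc a ++ enc b ++ enc d) = enc (f (a, b, d))`. This gives `ē ∘ f̃ = g̃ᵏ ∘ ē`
on every configuration (on those of length at most 2 both sides are `[]` by counting lengths), and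
the statement is its `t`-fold iterate.
-/

section Unravel

variable {S : Type*} (g : S × S × S → S)

lemma unravel_length : ∀ l : List S, (unravel g l).length = l.length - 2
  | [] | [_] | [_, _] => rfl
  | _ :: b :: c :: rest => by
    simp [unravel, unravel_length (b :: c :: rest)]

lemma iterate_unravel_length (n : ℕ) (l : List S) :
    ((unravel g)^[n] l).length = l.length - 2 * n := by
  induction n generalizing l with
  | zero => rfl
  | succ n ih =>
    rw [Function.iterate_succ_apply, ih, unravel_length]
    omega

lemma iterate_unravel_eq_nil {n : ℕ} {l : List S} (h : l.length ≤ 2 * n) :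
    (unravel g)^[n] l = [] :=
  List.eq_nil_of_length_eq_zero (by rw [iterate_unravel_length]; omega)

lemma unravel_eq_nil {l : List S} (h : l.length ≤ 2) : unravel g l = [] :=
  iterate_unravel_eq_nil g (n := 1) h

lemma unravel_take : ∀ (m : ℕ) (l : List S), unravel g (l.take (m + 2)) = (unravel g l).take m
  | 0, l => by
    rw [unravel_eq_nil g (by simp), List.take_zero]
  | m + 1, a :: b :: c :: rest => by
    change g (a, b, c) :: unravel g ((b :: c :: rest).take (m + 2)) = _
    rw [unravel_take m (b :: c :: rest)]
    rfl
  | m + 1, [] | m + 1, [_] | m + 1, [_, _] => by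
    rw [List.take_of_length_le (by simp), unravel_eq_nil g (by simp), List.take_nil]

lemma unravel_append (xs ys : List S) :
    unravel g (xs ++ ys) = unravel g (xs ++ ys.take 2) ++ unravel g ys := by
  obtain hys | ⟨y₁, y₂, r, rfl⟩ : ys.length ≤ 2 ∨ ∃ y₁ y₂ r, ys = y₁ :: y₂ :: r := by
    match ys with
    | [] | [_] | [_, _] => exact .inl (by simp)
    | y₁ :: y₂ :: _ :: r => exact .inr ⟨y₁, y₂, _, rfl⟩
  · rw [List.take_of_length_le hys, unravel_eq_nil g hys, List.append_nil]
  induction xs with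
  | nil => rfl
  | cons x xs ih =>
    match xs with
    | [] => rfl
    | [x₂] => simp [unravel]
    | x₂ :: x₃ :: xs => simpa [unravel] using ih

lemma iterate_unravel_append (n : ℕ) (xs ys : List S) :
    (unravel g)^[n] (xs ++ ys)
      = (unravel g)^[n] (xs ++ ys.take (2 * n)) ++ (unravel g)^[n] ys := by
  induction n generalizing xs ys with
  | zero => simp
  | succ n ih =>
    have hshift : unravel g (xs ++ ys.take (2 * n + 2))
        = unravel g (xs ++ ys.take 2) ++ (unravel g ys).take (2 * n) := by
      rw [unravel_append g xs, List.take_take, Nat.min_eq_left (by omega), unravel_take]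
    simp only [Function.iterate_succ_apply, mul_add_one]
    rw [unravel_append g xs, ih, ← hshift]

end Unravel

section Encoding

variable {S T : Type*} {enc : S → List T} {k : ℕ}

lemma ebar_cons (a : S) (c : List S) : ebar enc (a :: c) = enc a ++ ebar enc c := rfl

lemma length_ebar (henc_len : ∀ b, (enc b).length = k) (c : List S) :
    (ebar enc c).length = k * c.length := by
  induction c with
  | nil => simp [ebar]
  | cons a c ih => rw [ebar_cons, List.length_append, ih, henc_len, List.length_cons]; ring

lemma ebar_unravel {f : S × S × S → S} {g : T × T × T → T}
    (henc_len : ∀ b, (enc b).length = k)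
    (hwit : ∀ s₁ s₂ s₃ : S,
      enc (f (s₁, s₂, s₃)) = (unravel g)^[k] (enc s₁ ++ enc s₂ ++ enc s₃)) :
    ∀ c : List S, ebar enc (unravel f c) = (unravel g)^[k] (ebar enc c)
  | a :: b :: d :: rest => by
    have hwindow : (ebar enc (b :: d :: rest)).take (2 * k) = enc b ++ enc d := by
      rw [ebar_cons, ebar_cons, ← List.append_assoc,
        List.take_left' (by simp [henc_len]; omega)]
    change enc (f (a, b, d)) ++ ebar enc (unravel f (b :: d :: rest)) = _
    rw [ebar_cons, iterate_unravel_append, hwindow, ← List.append_assoc, hwit,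
      ebar_unravel henc_len hwit (b :: d :: rest)]
  | [] | [_] | [_, _] => by
    rw [unravel_eq_nil f (by simp), iterate_unravel_eq_nil g
      (by simp only [length_ebar henc_len, List.length_cons, List.length_nil]; omega)]
    rfl

end Encoding

theorem stmt_1_general (f g : Bool × Bool × Bool → Bool) (k : ℕ)
    (enc : Bool → List Bool)
    (henc_len : ∀ b, (enc b).length = k)
    (hwit : ∀ s₁ s₂ s₃ : Bool,
      enc (f (s₁, s₂, s₃)) = (unravel g)^[k] (enc s₁ ++ enc s₂ ++ enc s₃))
    (t : ℕ)
    (c : List Bool) :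
    ebar enc ((unravel f)^[t] c) = (unravel g)^[k * t] (ebar enc c) := by
  induction t with
  | zero => rfl
  | succ t ih =>
    rw [Function.iterate_succ_apply', ebar_unravel henc_len hwit, ih, mul_add_one,
      add_comm, Function.iterate_add_apply]

/-- if `enc` witnesses `f ≤ₖ g`, then for every `t ≥ 1` and every configuration
`c` of length `l ≥ 2t + 1` one has `ē(f̃^t(c)) = g̃^{kt}(ē(c))`. -/
theorem stmt_1 (f g : Bool × Bool × Bool → Bool) (k : ℕ)
    (enc : Bool → List Bool)
    (henc_inj : Function.Injective enc)
    (henc_len : ∀ b, (enc b).length = k)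
    (hwit : ∀ s₁ s₂ s₃ : Bool,
      enc (f (s₁, s₂, s₃)) = (unravel g)^[k] (enc s₁ ++ enc s₂ ++ enc s₃))
    (t : ℕ) (ht : 1 ≤ t)
    (c : List Bool) (hc : 2 * t + 1 ≤ c.length) :
    ebar enc ((unravel f)^[t] c) = (unravel g)^[k * t] (ebar enc c) :=
  stmt_1_general f g k enc henc_len hwit t c
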